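/- arXiv:2101.07861 — 2 statements merged into one kernel-verified Lean document; each statement's English description precedes it below -/
import Mathlib

section
/- Under the hypotheses of the previous transformation (r_{fi} = h b_i (F_i^T λ_{fi} + G_i^T λ_{gi}) and λ_{fi} = λ⁺ + ∑_{j=1}^s (a_{ji}/b_i) r_{fj}), each stage variable satisfies λ_{fi} = λ⁺ + h ∑_{j=1}^s (a_{ji} b_j / b_i) (F_j^T λ_{fj} + G_j^T λ_{gj}); that is, the discrete adjoint stages satisfy a Runge–Kutta scheme with transposed coefficients ā_{ij} = a_{ji} b_j / b_i. -/
open Matrix Finset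

/-- If `r_{fi} = h bᵢ (Fᵢᵀ λ_{fi} + Gᵢᵀ λ_{gi})` and
`λ_{fi} = λ⁺ + ∑_j (a_{ji}/bᵢ) r_{fj}`, then
`λ_{fi} = λ⁺ + h ∑_j (a_{ji} b_j / bᵢ) (Fⱼᵀ λ_{fj} + Gⱼᵀ λ_{gj})`:
the discrete adjoint stages satisfy the Runge–Kutta scheme with
transposed coefficients `ā_{ij} = a_{ji} b_j / bᵢ`. -/
theorem discrete_adjoint_stage_rk_form
    {s nx nz : ℕ} (a : Matrix (Fin s) (Fin s) ℝ) (b : Fin s → ℝ)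
    (hb : ∀ i, b i ≠ 0) (h : ℝ) (hh : 0 < h)
    (F : Fin s → Matrix (Fin nx) (Fin nx) ℝ)
    (G : Fin s → Matrix (Fin nz) (Fin nx) ℝ)
    (rf lf : Fin s → Fin nx → ℝ) (lg : Fin s → Fin nz → ℝ)
    (lamPlus : Fin nx → ℝ)
    (hr : ∀ i, rf i = (h * b i) • ((F i)ᵀ.mulVec (lf i) + (G i)ᵀ.mulVec (lg i)))
    (hlf : ∀ i, lf i = lamPlus + ∑ j, (a j i / b i) • rf j) :
    ∀ i, lf i = lamPlus
      + h • ∑ j, (a j i * b j / b i) • ((F j)ᵀ.mulVec (lf j) + (G j)ᵀ.mulVec (lg j)) := by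
  intro i
  rw [hlf i, Finset.smul_sum]
  congr 1
  apply Finset.sum_congr rfl
  intro j _
  rw [hr j, smul_smul, smul_smul]
  congr 1
  field_simp
end

section
/- Let U_i ∈ ℝ^{n_x×n_u} for i = 1,…,s and suppose r_{fi} = h b_i (F_i^T λ_{fi} + G_i^T λ_{gi}), r_f = λ⁺, and λ_{fi} = λ⁺ + h ∑_{j=1}^s (a_{ji} b_j / b_i)(F_j^T λ_{fj} + G_j^T λ_{gj}) with b_i ≠ 0. Then ∑_{i=1}^s h (∑_{j=1}^s a_{ij} U_j^T) r_{fi} + h ∑_{i=1}^s b_i U_i^T r_f = h ∑_{i=1}^s b_i U_i^T λ_{fi}. -/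
open Matrix Finset

lemma aux_sum_mulVec {ι m n : Type*} [Fintype n] (t : Finset ι)
    (M : ι → Matrix m n ℝ) (w : n → ℝ) :
    (∑ j ∈ t, M j) *ᵥ w = ∑ j ∈ t, M j *ᵥ w := by
  ext x
  simp only [Matrix.mulVec, dotProduct, Finset.sum_apply, Matrix.sum_apply,
    Finset.sum_mul]
  rw [Finset.sum_comm]

lemma aux_mulVec_sum {ι m n : Type*} [Fintype n] (t : Finset ι)
    (M : Matrix m n ℝ) (w : ι → n → ℝ) :
    M *ᵥ (∑ j ∈ t, w j) = ∑ j ∈ t, M *ᵥ w j := by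
  ext x
  simp only [Matrix.mulVec, dotProduct, Finset.sum_apply, Finset.mul_sum]
  rw [Finset.sum_comm]

/-- The discrete reduced-gradient contribution
`∑_i h (∑_j a_{ij} Uⱼᵀ) r_{fi} + h ∑_i bᵢ Uᵢᵀ r_f` equals the quadrature
`h ∑_i bᵢ Uᵢᵀ λ_{fi}`, given `r_{fi} = h bᵢ (Fᵢᵀ λ_{fi} + Gᵢᵀ λ_{gi})`,
`r_f = λ⁺` and the stage relations
`λ_{fi} = λ⁺ + h ∑_j (a_{ji} b_j / bᵢ)(Fⱼᵀ λ_{fj} + Gⱼᵀ λ_{gj})`. -/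
theorem discrete_reduced_gradient_identity
    {s nx nz nu : ℕ} (a : Matrix (Fin s) (Fin s) ℝ) (b : Fin s → ℝ)
    (hb : ∀ i, b i ≠ 0) (h : ℝ) (hh : 0 < h)
    (F : Fin s → Matrix (Fin nx) (Fin nx) ℝ)
    (G : Fin s → Matrix (Fin nz) (Fin nx) ℝ)
    (U : Fin s → Matrix (Fin nx) (Fin nu) ℝ)
    (rf lf : Fin s → Fin nx → ℝ) (lg : Fin s → Fin nz → ℝ)
    (rF lamPlus : Fin nx → ℝ)
    (hr : ∀ i, rf i = (h * b i) • ((F i)ᵀ.mulVec (lf i) + (G i)ᵀ.mulVec (lg i)))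
    (hrF : rF = lamPlus)
    (hlf : ∀ i, lf i = lamPlus
      + h • ∑ j, (a j i * b j / b i) • ((F j)ᵀ.mulVec (lf j) + (G j)ᵀ.mulVec (lg j))) :
    ∑ i, h • (∑ j, a i j • (U j)ᵀ).mulVec (rf i)
      + h • ∑ i, b i • (U i)ᵀ.mulVec rF
      = h • ∑ i, b i • (U i)ᵀ.mulVec (lf i) := by
  classical
  set v : Fin s → Fin nx → ℝ :=
    fun j => (F j)ᵀ.mulVec (lf j) + (G j)ᵀ.mulVec (lg j) with hv
  have hL1 : ∑ i, h • (∑ j, a i j • (U j)ᵀ).mulVec (rf i)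
      = ∑ i, ∑ j, (h * h * (a i j * b i)) • (U j)ᵀ.mulVec (v i) := by
    refine Finset.sum_congr rfl fun i _ => ?_
    rw [hr i, Matrix.mulVec_smul, aux_sum_mulVec, Finset.smul_sum, Finset.smul_sum]
    refine Finset.sum_congr rfl fun j _ => ?_
    simp only [Matrix.smul_mulVec, smul_smul]
    congr 1
    ring
  have hR : h • ∑ i, b i • (U i)ᵀ.mulVec (lf i)
      = h • ∑ i, b i • (U i)ᵀ.mulVec lamPlus
        + ∑ i, ∑ j, (h * h * (a j i * b j)) • (U i)ᵀ.mulVec (v j) := by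
    rw [Finset.smul_sum]
    rw [show (∑ i, h • b i • (U i)ᵀ.mulVec (lf i))
        = ∑ i, (h • b i • (U i)ᵀ.mulVec lamPlus
          + ∑ j, (h * h * (a j i * b j)) • (U i)ᵀ.mulVec (v j)) from
      Finset.sum_congr rfl fun i _ => ?_]
    · rw [Finset.sum_add_distrib, Finset.smul_sum]
    · rw [hlf i, Matrix.mulVec_add, smul_add, smul_add]
      congr 1
      rw [Matrix.mulVec_smul, aux_mulVec_sum]
      rw [Finset.smul_sum, Finset.smul_sum, Finset.smul_sum]
      refine Finset.sum_congr rfl fun j _ => ?_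
      rw [Matrix.mulVec_smul, smul_smul, smul_smul, smul_smul]
      congr 1
      field_simp [hb i]
  rw [hL1, hR, hrF, Finset.sum_comm]
  exact add_comm _ _
end
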